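/- arXiv:1503.04368 — 2 statements merged into one kernel-verified Lean document; each statement's English description precedes it below -/
import Mathlib

section
/- Let ℓ be a prime, m ∈ ℕ ∪ {∞}, and (K,v) a valued field. Every σ ∈ D_v^m vanishes on U_v^1 and hence induces an element σ_v ∈ 𝔤^m(Kv) via the canonical isomorphism Kv^× ≅ U_v/U_v^1. The map σ ↦ σ_v is a surjective group homomorphism D_v^m → 𝔤^m(Kv) with kernel I_v^m; in particular it induces a canonical isomorphism D_v^m / I_v^m ≅ 𝔤^m(Kv). -/
open Polynomial

noncomputable section

/-- The coefficient ring `Λ_m`: `ℤ/ℓ^m` for finite `m`, and `ℤ_ℓ` for `m = ∞`. -/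
def Lam (ℓ : ℕ) [Fact ℓ.Prime] : ℕ∞ → Type
  | ⊤ => PadicInt ℓ
  | (m : ℕ) => ZMod (ℓ ^ m)

instance (ℓ : ℕ) [Fact ℓ.Prime] : (m : ℕ∞) → CommRing (Lam ℓ m)
  | ⊤ => inferInstanceAs (CommRing (PadicInt ℓ))
  | (m : ℕ) => inferInstanceAs (CommRing (ZMod (ℓ ^ m)))

/-- The canonical projection `Λ_m → Λ_n` (for `n ≤ m`; junk value `0` otherwise). -/
def LamProj (ℓ : ℕ) [Fact ℓ.Prime] : (m n : ℕ∞) → Lam ℓ m →+ Lam ℓ n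
  | ⊤, ⊤ => AddMonoidHom.id _
  | ⊤, (n : ℕ) => (PadicInt.toZModPow n).toAddMonoidHom
  | (m : ℕ), (n : ℕ) =>
      if h : ℓ ^ n ∣ ℓ ^ m then (ZMod.castHom h (ZMod (ℓ ^ n))).toAddMonoidHom else 0
  | (_ : ℕ), ⊤ => 0

/-- The `ℓ^m`-minimized Galois group `𝔤^m(K) = Hom(Kˣ, Λ_m)`. -/
abbrev gal (ℓ : ℕ) [Fact ℓ.Prime] (m : ℕ∞) (K : Type*) [Field K] : Type _ :=
  Additive Kˣ →+ Lam ℓ m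

variable {ℓ : ℕ} [Fact ℓ.Prime] {K : Type*} [Field K]

open scoped Classical

/-- Evaluation of `σ ∈ 𝔤^m(K)` at a unit of `K`. -/
def galu {m : ℕ∞} (σ : gal ℓ m K) (x : Kˣ) : Lam ℓ m :=
  σ (Additive.ofMul x)

/-- Evaluation of `σ ∈ 𝔤^m(K)` at an arbitrary element of `K` (junk value `0` at `0`). -/
def galApp {m : ℕ∞} (σ : gal ℓ m K) (x : K) : Lam ℓ m :=
  if hx : x ≠ 0 then galu σ (Units.mk0 x hx) else 0

/-- Scalar multiplication of `𝔤^m(K)` by `Λ_m`. -/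
def galSmul {m : ℕ∞} (a : Lam ℓ m) (σ : gal ℓ m K) : gal ℓ m K :=
  AddMonoidHom.mk' (fun x => a * σ x) (by intro x y; simp only [map_add, mul_add])

/-- The canonical map `𝔤^m(K) → 𝔤^n(K)`, `σ ↦ σ_n`. -/
def galProj (m n : ℕ∞) (σ : gal ℓ m K) : gal ℓ n K :=
  (LamProj ℓ m n).comp σ

/-- `(σ,τ)` is a C-pair: `σ(x)·τ(1−x) = σ(1−x)·τ(x)` for all `x ∈ K ∖ {0,1}`. -/
def IsCPair {m : ℕ∞} (σ τ : gal ℓ m K) : Prop :=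
  ∀ x : K, x ≠ 0 → x ≠ 1 →
    galApp σ x * galApp τ (1 - x) = galApp σ (1 - x) * galApp τ x

/-- A subset of `𝔤^m(K)` is a C-set if all pairs of its elements are C-pairs. -/
def IsCSet {m : ℕ∞} (S : Set (gal ℓ m K)) : Prop :=
  ∀ σ ∈ S, ∀ τ ∈ S, IsCPair σ τ

/-- `μ_{c·ℓ^m} ⊂ K`: the polynomial `X^{c·ℓ^m} − 1` splits completely in `K`
(for all finite exponents when `m = ∞`). -/
def MuIn (K : Type*) [Field K] (c ℓ : ℕ) : ℕ∞ → Prop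
  | ⊤ => ∀ k : ℕ, Polynomial.Splits (Polynomial.map (RingHom.id K) (Polynomial.X ^ (c * ℓ ^ k) - 1))
  | (N : ℕ) => Polynomial.Splits (Polynomial.map (RingHom.id K) (Polynomial.X ^ (c * ℓ ^ N) - 1))

/-- `M_r(n) = (r+1)·n − r`. -/
def Mfun (r : ℕ) : ℕ∞ → ℕ∞
  | ⊤ => ⊤
  | (n : ℕ) => (((r + 1) * n - r : ℕ) : ℕ∞)

/-- `N(n) = M_1((6·ℓ^{3n−2} − 7)·(n−1) + 3n − 2)`. -/
def Nfun (ℓ : ℕ) : ℕ∞ → ℕ∞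
  | ⊤ => ⊤
  | (n : ℕ) => Mfun 1 (((6 * ℓ ^ (3 * n - 2) - 7) * (n - 1) + 3 * n - 2 : ℕ) : ℕ∞)

/-- `R(n) = N(M_2(M_1(n)))`. -/
def Rfun (ℓ : ℕ) (n : ℕ∞) : ℕ∞ :=
  Nfun ℓ (Mfun 2 (Mfun 1 n))

/-- The minimized inertia group `I_v^m` of a valuation (valuation subring) of `K`:
homomorphisms vanishing on the `v`-units. -/
def inertia (ℓ : ℕ) [Fact ℓ.Prime] (m : ℕ∞) (A : ValuationSubring K) : Set (gal ℓ m K) :=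
  {σ | ∀ x : Kˣ, A.valuation (x : K) = 1 → galu σ x = 0}

/-- The minimized decomposition group `D_v^m` of a valuation (valuation subring) of `K`:
homomorphisms vanishing on the principal `v`-units `1 + 𝔪_v`. -/
def decomp (ℓ : ℕ) [Fact ℓ.Prime] (m : ℕ∞) (A : ValuationSubring K) : Set (gal ℓ m K) :=
  {σ | ∀ x : Kˣ, A.valuation ((x : K) - 1) < 1 → galu σ x = 0}

/-- A subgroup of (the units of) a linearly ordered group-with-zero is convex. -/
def IsConvexSub {Γ : Type*} [LinearOrderedCommGroupWithZero Γ] (C : Subgroup Γˣ) : Prop :=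
  ∀ γ c : Γˣ, (1 : Γ) ≤ (γ : Γ) → (γ : Γ) ≤ (c : Γ) → c ∈ C → γ ∈ C

/-- A subgroup is `ℓ`-divisible. -/
def IsLDivisible {Γ : Type*} [LinearOrderedCommGroupWithZero Γ] (ℓ : ℕ) (C : Subgroup Γˣ) :
    Prop :=
  ∀ c ∈ C, ∃ d ∈ C, d ^ ℓ = c

/-- Condition (V1): the value group `vK` contains no nontrivial `ℓ`-divisible convex
subgroups. -/
def NoLDivConvex (ℓ : ℕ) (A : ValuationSubring K) : Prop :=
  ∀ C : Subgroup (A.ValueGroup)ˣ, IsConvexSub C → IsLDivisible ℓ C → C = ⊥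

/-- The residue field `Kv` of a valuation. -/
abbrev resField (A : ValuationSubring K) : Type _ := IsLocalRing.ResidueField A

/-- `τ ∈ 𝔤^m(Kv)` is the element induced by `σ ∈ D_v^m` (i.e. `τ = σ_v`): for every
`v`-unit `x` one has `τ(x̄) = σ(x)`. -/
def Induces {m : ℕ∞} (A : ValuationSubring K) (σ : gal ℓ m K)
    (τ : gal ℓ m (resField A)) : Prop :=
  ∀ (x : Kˣ) (h : A.valuation (x : K) = 1),
    galApp τ (IsLocalRing.residue A ⟨(x : K), (A.valuation_le_one_iff (x : K)).mp h.le⟩) =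
      galu σ x

/-- An `m`-visible valuation. -/
def IsVisibleVal (ℓ : ℕ) [Fact ℓ.Prime] (m : ℕ∞) (A : ValuationSubring K) : Prop :=
  NoLDivConvex ℓ A ∧
  ¬ IsCSet (Set.univ : Set (gal ℓ m (resField A))) ∧
  ∀ B : ValuationSubring (resField A),
    decomp ℓ m B = Set.univ → inertia ℓ m B = {0}

/-- `Σ^⊥ = ∩_{σ ∈ Σ} ker σ ⊆ Kˣ`. -/
def orth {m : ℕ∞} (S : Set (gal ℓ m K)) : Set Kˣ :=
  {x | ∀ σ ∈ S, galu σ x = 0}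

/-- `σ` is valuative: `σ ∈ I_v^m` for some valuation `v` of `K`. -/
def IsValuative {m : ℕ∞} (σ : gal ℓ m K) : Prop :=
  ∃ A : ValuationSubring K, σ ∈ inertia ℓ m A

/-- `V = v_σ` is the coarsest valuation with `σ ∈ I_V^m`. -/
def IsVsigma {m : ℕ∞} (σ : gal ℓ m K) (V : ValuationSubring K) : Prop :=
  σ ∈ inertia ℓ m V ∧ ∀ W : ValuationSubring K, σ ∈ inertia ℓ m W → W ≤ V

/-- `V = v_Σ` is the coarsest valuation with `Σ ⊆ I_V^m`. -/
def IsVSet {m : ℕ∞} (S : Set (gal ℓ m K)) (V : ValuationSubring K) : Prop :=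
  S ⊆ inertia ℓ m V ∧ ∀ W : ValuationSubring K, S ⊆ inertia ℓ m W → W ≤ V

/-- The set `D^m_n(Σ)`. -/
def Dmn (n m : ℕ∞) (S : Set (gal ℓ n K)) : Set (gal ℓ n K) :=
  {τ | ∀ σ ∈ S, ∃ τ₁ τ₂ : gal ℓ n K, ∃ σ' τ' τ₁' τ₂' : gal ℓ m K,
    galProj m n σ' = σ ∧ galProj m n τ' = τ ∧ galProj m n τ₁' = τ₁ ∧ galProj m n τ₂' = τ₂ ∧
    ¬ IsCPair τ₁ τ₂ ∧ IsCPair σ' τ' ∧ IsCPair σ' τ₁' ∧ IsCPair σ' τ₂'}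

/-- The set `I^m_n(Σ)`. -/
def Imn (n m : ℕ∞) (S : Set (gal ℓ n K)) : Set (gal ℓ n K) :=
  {σ | σ ∈ S ∧ ∃ σ' : gal ℓ m K, galProj m n σ' = σ ∧
    ∀ τ ∈ S, ∃ τ' : gal ℓ m K, galProj m n τ' = τ ∧ IsCPair σ' τ'}

/-- `K` is a function field over `k`, i.e. a finitely generated field extension. -/
def IsFunctionField (k K : Type*) [Field k] [Field K] [Algebra k K] : Prop :=
  ∃ s : Finset K, IntermediateField.adjoin k (s : Set K) = ⊤

/-- `trdeg(K|k) = d`. -/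
def HasTrdeg (k K : Type*) [Field k] [Field K] [Algebra k K] (d : ℕ) : Prop :=
  ∃ b : Fin d → K, IsTranscendenceBasis k b


/-- The set `ℓ^n·𝔤^m(K)` (interpreted as the trivial subgroup when `n = ∞`). -/
def lPowSet (ℓ : ℕ) [Fact ℓ.Prime] (m : ℕ∞) (K : Type*) [Field K] : ℕ∞ → Set (gal ℓ m K)
  | ⊤ => {0}
  | (k : ℕ) => {x | ∃ σ : gal ℓ m K, x = galSmul ((ℓ : Lam ℓ m) ^ k) σ}

end

/-!
A character `σ ∈ D_v^m` kills `U_v^1`, the kernel of the surjection `U_v → (Kv)ˣ`, so its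
restriction to `U_v` factors uniquely through `(Kv)ˣ`; `σ_v = 0` says exactly that `σ` kills
`U_v`. For surjectivity, a character of `(Kv)ˣ` pulls back to one of `U_v` killing `U_v^1`, and
this extends to `Kˣ` because `Kˣ / U_v ≅ vK` is torsion-free, i.e. `U_v` is saturated. Characters
with values in `ℤ/ℓ^m` extend along a saturated `U ≤ G` since `U/ℓ^m U ↪ G/ℓ^m G` and `ℤ/ℓ^m` is
self-injective; for `ℤ_ℓ` one extends modulo every `ℓ^k` and concludes by compactness.
-/

namespace ZMod

theorem dvd_of_forall_mul_eq_zero {n : ℕ} [NeZero n] {a c : ZMod n}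
    (h : ∀ r : ZMod n, r * a = 0 → r * c = 0) : a ∣ c := by
  -- `n / d` kills `a`, hence `c`, so `d ∣ c`; and `d = a * a⁻¹` by `ZMod.mul_inv_eq_gcd`.
  set d := a.val.gcd n
  have hdn : d ∣ n := Nat.gcd_dvd_right _ _
  have hd : 0 < n / d :=
    Nat.div_pos (Nat.gcd_le_right _ (NeZero.pos n)) (Nat.gcd_pos_of_pos_right _ (NeZero.pos n))
  obtain ⟨e, he⟩ : d ∣ c.val := by
    have hc := h (n / d : ℕ) (by
      obtain ⟨k, hk⟩ := Nat.gcd_dvd_left a.val n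
      rw [← natCast_zmod_val a, ← Nat.cast_mul, natCast_eq_zero_iff, hk, ← mul_assoc,
        Nat.div_mul_cancel hdn]
      exact dvd_mul_right _ _)
    rw [← natCast_zmod_val c, ← Nat.cast_mul, natCast_eq_zero_iff] at hc
    exact Nat.dvd_of_mul_dvd_mul_left hd (by rwa [Nat.div_mul_cancel hdn])
  exact ⟨a⁻¹ * e, by rw [← mul_assoc, mul_inv_eq_gcd, ← natCast_zmod_val c, he, Nat.cast_mul]⟩

theorem baer_self (n : ℕ) [NeZero n] : Module.Baer (ZMod n) (ZMod n) := by
  have := IsPrincipalIdealRing.of_surjective (Int.castRingHom (ZMod n)) intCast_surjective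
  intro I g
  obtain ⟨a, rfl⟩ := (IsPrincipalIdealRing.principal I).principal
  have ha : a ∈ Ideal.span {a} := Ideal.mem_span_singleton_self a
  obtain ⟨y, hy⟩ : a ∣ g ⟨a, ha⟩ := dvd_of_forall_mul_eq_zero fun r hr => by
    rw [← smul_eq_mul, ← map_smul, ← map_zero g]
    exact congrArg g (Subtype.ext hr)
  refine ⟨LinearMap.mulRight (ZMod n) y, fun x hx => ?_⟩
  obtain ⟨t, rfl⟩ := Ideal.mem_span_singleton'.mp hx
  have : (⟨t * a, hx⟩ : Ideal.span {a}) = t • ⟨a, ha⟩ := rfl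
  rw [this, map_smul, hy, LinearMap.mulRight_apply, smul_eq_mul, mul_assoc]

end ZMod

namespace ModN

variable {G : Type*} [AddCommGroup G] {n : ℕ}

theorem mkQ_eq_zero_iff {g : G} : mkQ n g = 0 ↔ ∃ h : G, n • h = g := by
  simp [mkQ, Submodule.Quotient.mk_eq_zero, natCast_zsmul]

theorem mkQ_surjective : Function.Surjective (mkQ n : G →+ ModN G n) :=
  Submodule.mkQ_surjective _

end ModN

namespace AddSubmonoid.NSMulSaturated

variable {G : Type*} [AddCommGroup G] {U : AddSubgroup G}

theorem exists_zmod_extension (hU : U.NSMulSaturated) (n : ℕ) [NeZero n] (f : U →+ ZMod n) :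
    ∃ F : G →+ ZMod n, ∀ u : U, F u = f u := by
  let ι : ModN U n →+ ModN G n :=
    ModN.liftEquiv.symm ⟨(ModN.mkQ n).comp U.subtype, fun g =>
      ModN.mkQ_eq_zero_iff.mpr ⟨g, by simp⟩⟩
  let f' : ModN U n →+ ZMod n :=
    ModN.liftEquiv.symm ⟨f, fun u => by rw [nsmul_eq_mul, ZMod.natCast_self, zero_mul]⟩
  have hι : Function.Injective ι := by
    rw [injective_iff_map_eq_zero, ModN.mkQ_surjective.forall]
    intro u hu
    obtain ⟨g, hg⟩ := ModN.mkQ_eq_zero_iff.mp hu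
    have hgU : g ∈ U := (hU (hg ▸ u.2)).resolve_left (NeZero.ne n)
    exact ModN.mkQ_eq_zero_iff.mpr ⟨⟨g, hgU⟩, Subtype.ext hg⟩
  obtain ⟨h, hh⟩ := (ZMod.baer_self n).extension_property (ι.toZModLinearMap n) hι
    (f'.toZModLinearMap n)
  exact ⟨h.toAddMonoidHom.comp (ModN.mkQ n), fun u => LinearMap.congr_fun hh (ModN.mkQ n u)⟩

end AddSubmonoid.NSMulSaturated

namespace PadicInt

variable {p : ℕ} [Fact p.Prime]

theorem isClosed_ker_toZModPow (k : ℕ) :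
    IsClosed (RingHom.ker (toZModPow k : ℤ_[p] →+* ZMod (p ^ k)) : Set ℤ_[p]) := by
  convert Metric.isClosed_closedBall (x := (0 : ℤ_[p])) (ε := (p : ℝ) ^ (-(k : ℤ))) using 1
  ext x
  simp [ker_toZModPow, ← norm_le_pow_iff_mem_span_pow]

theorem ker_toZModPow_antitone :
    Antitone fun k => RingHom.ker (toZModPow k : ℤ_[p] →+* ZMod (p ^ k)) := fun j k hjk => by
  simp only [ker_toZModPow]
  exact Ideal.span_singleton_le_span_singleton.mpr (pow_dvd_pow _ hjk)

-- The extensions modulo the various `p ^ k` need not be compatible; compactness of `G → ℤ_[p]`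
-- yields one function that is additive and extends `f` modulo every `p ^ k`.
theorem exists_extension_of_forall_toZModPow {G : Type*} [AddCommGroup G] (U : AddSubgroup G)
    (f : U →+ ℤ_[p])
    (h : ∀ k, ∃ F : G →+ ZMod (p ^ k), ∀ u : U, F u = toZModPow k (f u)) :
    ∃ F : G →+ ℤ_[p], ∀ u : U, F u = f u := by
  let I k := RingHom.ker (toZModPow k : ℤ_[p] →+* ZMod (p ^ k))
  let S : ℕ → Set (G → ℤ_[p]) := fun k =>
    (⋂ x, ⋂ y, {σ | σ (x + y) - σ x - σ y ∈ I k}) ∩ ⋂ u : U, {σ | σ u - f u ∈ I k}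
  have hclosed k : IsClosed (S k) :=
    (isClosed_iInter fun x => isClosed_iInter fun y =>
      (isClosed_ker_toZModPow k).preimage (by fun_prop)).inter
    (isClosed_iInter fun u => (isClosed_ker_toZModPow k).preimage (by fun_prop))
  have hanti : Antitone S := fun j k hjk σ hσ => by
    simp only [S, Set.mem_inter_iff, Set.mem_iInter, Set.mem_ofPred_eq] at hσ ⊢
    exact ⟨fun x y => ker_toZModPow_antitone hjk (hσ.1 x y),
      fun u => ker_toZModPow_antitone hjk (hσ.2 u)⟩
  have hne k : (S k).Nonempty := by
    obtain ⟨F, hF⟩ := h k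
    refine ⟨fun x => ((F x).val : ℤ_[p]), ?_⟩
    simp [S, I, Set.mem_iInter, RingHom.mem_ker, hF]
  obtain ⟨σ, hσ⟩ := IsCompact.nonempty_iInter_of_directed_nonempty_isCompact_isClosed S
    hanti.directed_ge hne (fun k => (hclosed k).isCompact) hclosed
  simp only [Set.mem_iInter, Set.mem_inter_iff, Set.mem_ofPred_eq, S, I, RingHom.mem_ker] at hσ
  refine ⟨AddMonoidHom.mk' σ fun x y => ?_, fun u => ?_⟩
  · exact ext_of_toZModPow.mp fun k => by simpa [sub_sub, sub_eq_zero] using (hσ k).1 x y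
  · exact ext_of_toZModPow.mp fun k => by simpa [sub_eq_zero] using (hσ k).2 u

end PadicInt

theorem AddSubmonoid.NSMulSaturated.exists_lam_extension {G : Type*} [AddCommGroup G]
    {U : AddSubgroup G} (hU : U.NSMulSaturated) (ℓ : ℕ) [Fact ℓ.Prime] (m : ℕ∞)
    (f : U →+ Lam ℓ m) : ∃ F : G →+ Lam ℓ m, ∀ u : U, F u = f u := by
  cases m with
  | top => exact PadicInt.exists_extension_of_forall_toZModPow U f fun k =>
      hU.exists_zmod_extension _ ((PadicInt.toZModPow k).toAddMonoidHom.comp f)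
  | coe m => exact hU.exists_zmod_extension _ f

section Valuation

variable {ℓ : ℕ} [Fact ℓ.Prime] {m : ℕ∞} {K : Type*} [Field K] (A : ValuationSubring K)

theorem ValuationSubring.unitGroup_nsmulSaturated :
    (Subgroup.toAddSubgroup A.unitGroup).NSMulSaturated := fun n x hx => by
  rw [or_iff_not_imp_left]
  intro hn
  exact (pow_eq_one_iff_left hn).mp ((map_pow A.valuation _ n).symm.trans hx)

theorem galApp_coe_units {F : Type*} [Field F] (τ : gal ℓ m F) (w : Fˣ) :
    galApp τ (w : F) = galu τ w := by
  rw [galApp, dif_pos w.ne_zero, Units.mk0_val]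

theorem induces_iff {σ : gal ℓ m K} {τ : gal ℓ m (resField A)} :
    Induces A σ τ ↔ ∀ u : A.unitGroup, galu τ (A.unitGroupToResidueFieldUnits u) = galu σ u := by
  simp only [Induces, ← galApp_coe_units]
  exact ⟨fun h u => h u u.2, fun h x hx => h ⟨x, hx⟩⟩

theorem exists_induces_of_mem_decomp {σ : gal ℓ m K} (hσ : σ ∈ decomp ℓ m A) :
    ∃ τ : gal ℓ m (resField A), Induces A σ τ := by
  let π := A.unitGroupToResidueFieldUnits.toAdditive
  let σU : Additive A.unitGroup →+ Lam ℓ m := σ.comp A.unitGroup.subtype.toAdditive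
  have hker : π.ker ≤ σU.ker := fun u hu => hσ _ <| by
    have : Additive.toMul u ∈ A.unitGroupToResidueFieldUnits.ker := hu
    rwa [A.ker_unitGroupToResidueFieldUnits] at this
  exact ⟨π.liftOfSurjective A.surjective_unitGroupToResidueFieldUnits ⟨σU, hker⟩,
    (induces_iff A).mpr fun u => π.liftOfRightInverse_comp_apply _ _ _ (Additive.ofMul u)⟩

theorem exists_mem_decomp_induces (τ : gal ℓ m (resField A)) :
    ∃ σ ∈ decomp ℓ m A, Induces A σ τ := by
  let f : Subgroup.toAddSubgroup A.unitGroup →+ Lam ℓ m :=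
    AddMonoidHom.mk' (fun u => galu τ (A.unitGroupToResidueFieldUnits ⟨Additive.toMul u, u.2⟩))
      fun u v => by
        rw [galu, galu, galu, ← map_add, ← ofMul_mul, ← map_mul]
        rfl
  obtain ⟨σ, hσ⟩ := A.unitGroup_nsmulSaturated.exists_lam_extension ℓ m f
  refine ⟨σ, fun x hx => ?_, (induces_iff A).mpr fun u => (hσ ⟨Additive.ofMul u, u.2⟩).symm⟩
  have hxU : x ∈ A.unitGroup := A.principal_units_le_units hx
  have hx1 : A.unitGroupToResidueFieldUnits ⟨x, hxU⟩ = 1 := by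
    rw [← MonoidHom.mem_ker, A.ker_unitGroupToResidueFieldUnits]
    exact hx
  refine (hσ ⟨Additive.ofMul x, hxU⟩).trans ?_
  change galu τ (A.unitGroupToResidueFieldUnits ⟨x, hxU⟩) = 0
  rw [hx1]
  exact map_zero τ

variable {A}

theorem induces_zero_iff {σ : gal ℓ m K} : Induces A σ 0 ↔ σ ∈ inertia ℓ m A := by
  rw [induces_iff]
  exact ⟨fun h x hx => (h ⟨x, hx⟩).symm, fun h u => (h u u.2).symm⟩

theorem Induces.unique {σ : gal ℓ m K} {τ₁ τ₂ : gal ℓ m (resField A)} (h₁ : Induces A σ τ₁)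
    (h₂ : Induces A σ τ₂) : τ₁ = τ₂ := by
  refine AddMonoidHom.ext fun w => ?_
  obtain ⟨u, hu⟩ := A.surjective_unitGroupToResidueFieldUnits (Additive.toMul w)
  have := ((induces_iff A).mp h₁ u).trans ((induces_iff A).mp h₂ u).symm
  rwa [hu] at this

theorem Induces.add {σ₁ σ₂ : gal ℓ m K} {τ₁ τ₂ : gal ℓ m (resField A)} (h₁ : Induces A σ₁ τ₁)
    (h₂ : Induces A σ₂ τ₂) : Induces A (σ₁ + σ₂) (τ₁ + τ₂) :=
  (induces_iff A).mpr fun u =>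
    congrArg₂ (· + ·) ((induces_iff A).mp h₁ u) ((induces_iff A).mp h₂ u)

theorem Induces.eq_zero_iff {σ : gal ℓ m K} {τ : gal ℓ m (resField A)} (h : Induces A σ τ) :
    τ = 0 ↔ σ ∈ inertia ℓ m A :=
  ⟨fun hτ => induces_zero_iff.mp (hτ ▸ h), fun hσ => h.unique (induces_zero_iff.mpr hσ)⟩

end Valuation

theorem stmt6_general (ℓ : ℕ) [Fact ℓ.Prime] (m : ℕ∞) (K : Type*) [Field K]
    (A : ValuationSubring K) :
    (∀ σ ∈ decomp ℓ m A, ∃! τ : gal ℓ m (resField A), Induces A σ τ) ∧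
    (∀ σ₁ ∈ decomp ℓ m A, ∀ σ₂ ∈ decomp ℓ m A,
      ∀ (τ₁ τ₂ : gal ℓ m (resField A)), Induces A σ₁ τ₁ → Induces A σ₂ τ₂ →
        Induces A (σ₁ + σ₂) (τ₁ + τ₂)) ∧
    (∀ τ : gal ℓ m (resField A), ∃ σ ∈ decomp ℓ m A, Induces A σ τ) ∧
    (∀ σ ∈ decomp ℓ m A, ∀ τ : gal ℓ m (resField A), Induces A σ τ →
      (τ = 0 ↔ σ ∈ inertia ℓ m A)) := by
  refine ⟨fun σ hσ => ?_, fun _ _ _ _ _ _ h₁ h₂ => h₁.add h₂, exists_mem_decomp_induces A,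
    fun _ _ _ h => h.eq_zero_iff⟩
  obtain ⟨τ, hτ⟩ := exists_induces_of_mem_decomp A hσ
  exact ⟨τ, hτ, fun _ h => h.unique hτ⟩

/-- The canonical map `D_v^m → 𝔤^m(Kv)`, `σ ↦ σ_v`, is a well-defined surjective
group homomorphism with kernel `I_v^m`. -/
theorem stmt6 (ℓ : ℕ) [Fact ℓ.Prime] (m : ℕ∞) (hm : 1 ≤ m) (K : Type*) [Field K]
    (A : ValuationSubring K) :
    (∀ σ ∈ decomp ℓ m A, ∃! τ : gal ℓ m (resField A), Induces A σ τ) ∧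
    (∀ σ₁ ∈ decomp ℓ m A, ∀ σ₂ ∈ decomp ℓ m A,
      ∀ (τ₁ τ₂ : gal ℓ m (resField A)), Induces A σ₁ τ₁ → Induces A σ₂ τ₂ →
        Induces A (σ₁ + σ₂) (τ₁ + τ₂)) ∧
    (∀ τ : gal ℓ m (resField A), ∃ σ ∈ decomp ℓ m A, Induces A σ τ) ∧
    (∀ σ ∈ decomp ℓ m A, ∀ τ : gal ℓ m (resField A), Induces A σ τ →
      (τ = 0 ↔ σ ∈ inertia ℓ m A)) :=
  stmt6_general ℓ m K A
end

section
/- Let ℓ be a prime, m ∈ ℕ ∪ {∞}, and (K,v) a valued field. Let σ, τ ∈ D_v^m be such that σ(−1) = τ(−1) = 0. Then (σ,τ) is a C-pair in 𝔤^m(K) if and only if (σ_v, τ_v) is a C-pair in 𝔤^m(Kv). -/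
open Polynomial

/-!
Both conditions only involve elements `x ∉ {0, 1}`. If `x` and `1 - x` are both `v`-units, the
C-pair identity at `x` for `(σ, τ)` is literally the one at `x̄` for `(σ_v, τ_v)`, and every
`x̄ ∉ {0, 1}` of `Kv` lifts to such an `x`. Otherwise the identity holds for any `σ, τ ∈ D_v^m`
killing `-1`: if `v(x) < 1` (resp. `v(1 - x) < 1`) then `1 - x` (resp. `x`) is a principal unit,
so both sides vanish; if `v(x) > 1` then `1 - x = -x(1 - x⁻¹)` with `1 - x⁻¹` a principal unit,
so `σ(1 - x) = σ(x)`, `τ(1 - x) = τ(x)`, and both sides agree.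
-/

section CPair

variable {ℓ : ℕ} [Fact ℓ.Prime] {K : Type*} [Field K] {m : ℕ∞}

def CPairAt (σ τ : gal ℓ m K) (x : K) : Prop :=
  galApp σ x * galApp τ (1 - x) = galApp σ (1 - x) * galApp τ x

theorem isCPair_iff_forall_cPairAt {σ τ : gal ℓ m K} :
    IsCPair σ τ ↔ ∀ x : K, x ≠ 0 → x ≠ 1 → CPairAt σ τ x :=
  Iff.rfl

section galApp

variable (σ : gal ℓ m K)

theorem galApp_of_ne_zero {x : K} (hx : x ≠ 0) : galApp σ x = galu σ (Units.mk0 x hx) :=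
  dif_pos hx

theorem galApp_zero : galApp σ 0 = 0 :=
  dif_neg (not_not.mpr rfl)

theorem galApp_mul {x y : K} (hx : x ≠ 0) (hy : y ≠ 0) :
    galApp σ (x * y) = galApp σ x + galApp σ y := by
  rw [galApp_of_ne_zero σ (mul_ne_zero hx hy), galApp_of_ne_zero σ hx, galApp_of_ne_zero σ hy,
    galu, galu, galu, ← map_add, ← ofMul_mul, Units.mk0_mul]

theorem galApp_neg (hσ1 : galu σ (-1 : Kˣ) = 0) (x : K) : galApp σ (-x) = galApp σ x := by
  rcases eq_or_ne x 0 with rfl | hx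
  · rw [neg_zero]
  have hneg1 : galApp σ (-1) = 0 := by
    rwa [galApp_of_ne_zero σ (neg_ne_zero.mpr one_ne_zero),
      show Units.mk0 (-1 : K) _ = -1 from Units.ext rfl]
  rw [neg_eq_neg_one_mul, galApp_mul σ (neg_ne_zero.mpr one_ne_zero) hx, hneg1, zero_add]

end galApp

section decomp

variable {A : ValuationSubring K} {σ : gal ℓ m K}

theorem galApp_eq_zero_of_mem_decomp (hσ : σ ∈ decomp ℓ m A) {y : K}
    (hy : A.valuation (y - 1) < 1) : galApp σ y = 0 := by
  rcases eq_or_ne y 0 with rfl | hy0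
  · exact galApp_zero σ
  exact (galApp_of_ne_zero σ hy0).trans (hσ _ hy)

theorem galApp_one_sub_of_one_lt_valuation (hσ : σ ∈ decomp ℓ m A)
    (hσ1 : galu σ (-1 : Kˣ) = 0) {x : K} (hx : 1 < A.valuation x) :
    galApp σ (1 - x) = galApp σ x := by
  have hx0 : x ≠ 0 := by
    rintro rfl
    simp at hx
  have hinv : A.valuation x⁻¹ < 1 := by
    rw [map_inv₀]
    exact inv_lt_one_of_one_lt₀ hx
  have hprincipal : galApp σ (1 - x⁻¹) = 0 :=
    galApp_eq_zero_of_mem_decomp hσ (by rwa [sub_sub_cancel_left, Valuation.map_neg])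
  have hu0 : 1 - x⁻¹ ≠ 0 := by
    intro h
    have := Valuation.map_one_sub_of_lt A.valuation hinv
    rw [h, map_zero] at this
    exact zero_ne_one this
  have hfactor : 1 - x = -(x * (1 - x⁻¹)) := by
    field_simp
    ring
  rw [hfactor, galApp_neg σ hσ1, galApp_mul σ hx0 hu0, hprincipal, add_zero]

theorem cPairAt_of_mem_decomp {τ : gal ℓ m K} (hσ : σ ∈ decomp ℓ m A) (hτ : τ ∈ decomp ℓ m A)
    (hσ1 : galu σ (-1 : Kˣ) = 0) (hτ1 : galu τ (-1 : Kˣ) = 0) {x : K}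
    (hx : A.valuation x ≠ 1 ∨ A.valuation (1 - x) ≠ 1) : CPairAt σ τ x := by
  rcases lt_trichotomy (A.valuation x) 1 with hlt | heq | hgt
  · have hlt' : A.valuation (1 - x - 1) < 1 := by
      rwa [sub_sub_cancel_left, Valuation.map_neg]
    rw [CPairAt, galApp_eq_zero_of_mem_decomp hσ hlt', galApp_eq_zero_of_mem_decomp hτ hlt',
      mul_zero, zero_mul]
  · have hle : A.valuation (1 - x) ≤ 1 := by
      simpa [heq] using Valuation.map_sub A.valuation 1 x
    have hlt : A.valuation (x - 1) < 1 := by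
      rw [← neg_sub, Valuation.map_neg]
      exact lt_of_le_of_ne hle (hx.resolve_left (not_not.mpr heq))
    rw [CPairAt, galApp_eq_zero_of_mem_decomp hσ hlt, galApp_eq_zero_of_mem_decomp hτ hlt,
      mul_zero, zero_mul]
  · rw [CPairAt, galApp_one_sub_of_one_lt_valuation hσ hσ1 hgt,
      galApp_one_sub_of_one_lt_valuation hτ hτ1 hgt, mul_comm]

end decomp

section residue

variable {A : ValuationSubring K} {σ τ : gal ℓ m K} {σv τv : gal ℓ m (resField A)}

theorem residue_ne_zero_iff_valuation_eq_one (a : A) :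
    IsLocalRing.residue A a ≠ 0 ↔ A.valuation (a : K) = 1 :=
  (IsLocalRing.residue_ne_zero_iff_isUnit a).trans (A.valuation_eq_one_iff a)

theorem Induces.galApp_residue (hσv : Induces A σ σv) {a : A}
    (ha : IsLocalRing.residue A a ≠ 0) :
    galApp σv (IsLocalRing.residue A a) = galApp σ (a : K) := by
  have hv := (residue_ne_zero_iff_valuation_eq_one a).mp ha
  have ha0 : (a : K) ≠ 0 := fun h => ha (by rw [show a = 0 from Subtype.ext h, map_zero])
  rw [galApp_of_ne_zero σ ha0]
  exact hσv (Units.mk0 _ ha0) hv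

theorem Induces.cPairAt_residue_iff (hσv : Induces A σ σv) (hτv : Induces A τ τv) {a : A}
    (h0 : IsLocalRing.residue A a ≠ 0) (h1 : IsLocalRing.residue A a ≠ 1) :
    CPairAt σv τv (IsLocalRing.residue A a) ↔ CPairAt σ τ (a : K) := by
  have hsub : IsLocalRing.residue A (1 - a) = 1 - IsLocalRing.residue A a := by
    rw [map_sub, map_one]
  have h1' : IsLocalRing.residue A (1 - a) ≠ 0 := by
    rw [hsub]
    exact sub_ne_zero.mpr h1.symm
  rw [CPairAt, CPairAt, ← hsub, hσv.galApp_residue h0, hτv.galApp_residue h0,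
    hσv.galApp_residue h1', hτv.galApp_residue h1']
  simp only [AddSubgroupClass.coe_sub, OneMemClass.coe_one]

end residue

end CPair

theorem stmt8_general (ℓ : ℕ) [Fact ℓ.Prime] (m : ℕ∞) (K : Type*) [Field K]
    (A : ValuationSubring K) (σ τ : gal ℓ m K)
    (hσ : σ ∈ decomp ℓ m A) (hτ : τ ∈ decomp ℓ m A)
    (hσ1 : galu σ (-1 : Kˣ) = 0) (hτ1 : galu τ (-1 : Kˣ) = 0)
    (σv τv : gal ℓ m (resField A)) (hσv : Induces A σ σv) (hτv : Induces A τ τv) :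
    IsCPair σ τ ↔ IsCPair σv τv := by
  simp only [isCPair_iff_forall_cPairAt]
  constructor
  · intro h xbar hx0 hx1
    obtain ⟨a, rfl⟩ := IsLocalRing.residue_surjective xbar
    refine (hσv.cPairAt_residue_iff hτv hx0 hx1).mpr (h a ?_ ?_)
    · exact fun ha => hx0 (by rw [show a = 0 from Subtype.ext ha, map_zero])
    · exact fun ha => hx1 (by rw [show a = 1 from Subtype.ext ha, map_one])
  · intro h x _ _
    by_cases hunit : A.valuation x = 1 ∧ A.valuation (1 - x) = 1
    · have hxA : x ∈ A := A.mem_of_valuation_le_one x hunit.1.le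
      have h1xA : 1 - x ∈ A := A.mem_of_valuation_le_one _ hunit.2.le
      have h0 := (residue_ne_zero_iff_valuation_eq_one ⟨x, hxA⟩).mpr hunit.1
      have h1 : IsLocalRing.residue A ⟨x, hxA⟩ ≠ 1 := by
        have := (residue_ne_zero_iff_valuation_eq_one ⟨1 - x, h1xA⟩).mpr hunit.2
        rwa [show (⟨1 - x, h1xA⟩ : A) = 1 - ⟨x, hxA⟩ from rfl, map_sub, map_one, sub_ne_zero,
          ne_comm] at this
      exact (hσv.cPairAt_residue_iff hτv h0 h1).mp (h _ h0 h1)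
    · exact cPairAt_of_mem_decomp hσ hτ hσ1 hτ1 (not_and_or.mp hunit)

/-- C-pairs and residue maps: `(σ,τ)` is a C-pair iff `(σ_v,τ_v)` is. -/
theorem stmt8 (ℓ : ℕ) [Fact ℓ.Prime] (m : ℕ∞) (hm : 1 ≤ m) (K : Type*) [Field K]
    (A : ValuationSubring K) (σ τ : gal ℓ m K)
    (hσ : σ ∈ decomp ℓ m A) (hτ : τ ∈ decomp ℓ m A)
    (hσ1 : galu σ (-1 : Kˣ) = 0) (hτ1 : galu τ (-1 : Kˣ) = 0)
    (σv τv : gal ℓ m (resField A)) (hσv : Induces A σ σv) (hτv : Induces A τ τv) :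
    IsCPair σ τ ↔ IsCPair σv τv :=
  stmt8_general ℓ m K A σ τ hσ hτ hσ1 hτ1 σv τv hσv hτv
end
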